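/- Let f, g ∈ L^1[0,1] with Haar supports contained in the dyadic intervals (excluding [0,2]), with disjoint Haar supports, c_I(f) = c_I(g) = 0 for a given dyadic interval I, and ‖f‖ > 0. Then for at least one choice j ∈ {1,2}, setting f' = L_j(f,I) and g' = L_j(g,I) (the same j for both), one has: supp_H(f') ∩ supp_H(g') = ∅, I ∉ supp_H(f') ∪ supp_H(g'), every Haar coefficient of f' (resp. g') is a Haar coefficient of f (resp. g) or zero, ‖f' + g'‖ > 0, and ‖f‖/‖f+g‖ ≤ ‖f'‖/‖f'+g'‖. -/

import Mathlib

/-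
`L₁` and `L₂` overwrite one half of `I` by a translate of the other, and neither creates new
Haar coefficients: a dyadic `J` inside the overwritten half takes the coefficient of its
translate, `I` gets `0`, and any other `J` is either disjoint from the overwritten half or
contains `I`, whose integral is unchanged because `c_I = 0`. The new index depends only on `J`,
so disjoint Haar supports stay disjoint.

Since `‖L₁ h‖ + ‖L₂ h‖ = 2‖h‖` for every `h`, the ratio `‖f‖/‖f+g‖` is the mediant of the two new
ratios, hence at most one of them. The denominators are positive by completeness of the Haar
system: if `f + g = 0` and the Haar supports are disjoint, all coefficients of `f` vanish, so its
primitive vanishes at the dyadic points, hence everywhere, and `f = 0` a.e. by Lebesgue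
differentiation.
-/

open MeasureTheory Set
open scoped Classical

noncomputable section

/-- The dyadic interval `[k/2^n, (k+1)/2^n)`. -/
def dyadic (n k : ℕ) : Set ℝ := Set.Ico ((k : ℝ) / 2 ^ n) (((k : ℝ) + 1) / 2 ^ n)

/-- Left half `I⁺` of a dyadic interval. -/
def dplus (n k : ℕ) : Set ℝ := dyadic (n + 1) (2 * k)

/-- Right half `I⁻` of a dyadic interval. -/
def dminus (n k : ℕ) : Set ℝ := dyadic (n + 1) (2 * k + 1)

/-- Haar coefficient `c_I(f)` with respect to the L¹-normalized Haar system. -/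
def haarC (f : ℝ → ℝ) (n k : ℕ) : ℝ :=
  (∫ x in dplus n k, f x) - ∫ x in dminus n k, f x

/-- The L¹-normalized Haar function `h_I`. -/
def haarF (n k : ℕ) : ℝ → ℝ := fun x =>
  if x ∈ dplus n k then (2 : ℝ) ^ n else if x ∈ dminus n k then -(2 : ℝ) ^ n else 0

/-- Index set for the Haar system: the dyadic intervals of `[0,1]` together with `[0,2]`. -/
inductive HIdx where
  | root : HIdx
  | node : ℕ → ℕ → HIdx
  deriving DecidableEq

/-- Validity of an index: `node n k` encodes `[k/2^n, (k+1)/2^n) ⊆ [0,1)`. -/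
def HIdx.valid : HIdx → Prop
  | .root => True
  | .node n k => k < 2 ^ n

/-- The interval encoded by an index. -/
def HIdx.iset : HIdx → Set ℝ
  | .root => Set.Ico (0 : ℝ) 2
  | .node n k => dyadic n k

/-- Haar coefficient, where `c_{[0,2]}(f) = ∫_{[0,1)} f` (for `f` supported in `[0,1)`). -/
def hcoef (f : ℝ → ℝ) : HIdx → ℝ
  | .root => ∫ x in Set.Ico (0 : ℝ) 1, f x
  | .node n k => haarC f n k

/-- Symmetrization `L₁(f, I)`: copy `f` from the left half `I⁺` onto the right half `I⁻`. -/
def symmL (f : ℝ → ℝ) (n k : ℕ) : ℝ → ℝ := fun x =>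
  if x ∈ dminus n k then f (x - 1 / 2 ^ (n + 1)) else f x

/-- Symmetrization `L₂(f, I)`: copy `f` from the right half `I⁻` onto the left half `I⁺`. -/
def symmR (f : ℝ → ℝ) (n k : ℕ) : ℝ → ℝ := fun x =>
  if x ∈ dplus n k then f (x + 1 / 2 ^ (n + 1)) else f x

open Filter Topology

lemma measurableSet_dyadic (n k : ℕ) : MeasurableSet (dyadic n k) := measurableSet_Ico

lemma dyadic_left_lt_right (n k : ℕ) : (k : ℝ) / 2 ^ n < ((k : ℝ) + 1) / 2 ^ n := by
  gcongr; linarith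

lemma Nat.div_eq_iff_mul_le_lt {j P k : ℕ} (hP : 0 < P) :
    j / P = k ↔ k * P ≤ j ∧ j < (k + 1) * P := by
  rw [← Nat.le_div_iff_mul_le hP, ← Nat.div_lt_iff_lt_mul hP]; omega

lemma div_two_pow_le_div_two_pow_add_iff (a b : ℝ) (n d : ℕ) :
    a / 2 ^ n ≤ b / 2 ^ (n + d) ↔ a * 2 ^ d ≤ b := by
  rw [pow_add, mul_comm, ← div_div, div_le_div_iff_of_pos_right (by positivity),
    le_div_iff₀ (by positivity)]

lemma div_two_pow_add_le_div_two_pow_iff (a b : ℝ) (n d : ℕ) :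
    b / 2 ^ (n + d) ≤ a / 2 ^ n ↔ b ≤ a * 2 ^ d := by
  rw [pow_add, mul_comm, ← div_div, div_le_div_iff_of_pos_right (by positivity),
    div_le_iff₀ (by positivity)]

lemma dyadic_subset_dyadic_iff {m j n k : ℕ} :
    dyadic m j ⊆ dyadic n k ↔ n ≤ m ∧ j / 2 ^ (m - n) = k := by
  rw [dyadic, dyadic, Ico_subset_Ico_iff (dyadic_left_lt_right m j)]
  constructor
  · rintro ⟨h₁, h₂⟩
    have hnm : n ≤ m := by
      have : (1 : ℝ) / 2 ^ m ≤ 1 / 2 ^ n := by rw [add_div, add_div] at h₂; linarith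
      rwa [one_div_le_one_div (by positivity) (by positivity),
        pow_le_pow_iff_right₀ one_lt_two] at this
    obtain ⟨d, rfl⟩ := Nat.exists_eq_add_of_le hnm
    rw [div_two_pow_le_div_two_pow_add_iff] at h₁
    rw [div_two_pow_add_le_div_two_pow_iff] at h₂
    rw [Nat.add_sub_cancel_left, Nat.div_eq_iff_mul_le_lt (by positivity), Nat.lt_iff_add_one_le]
    exact ⟨hnm, by exact_mod_cast h₁, by exact_mod_cast h₂⟩
  · rintro ⟨hnm, h⟩
    obtain ⟨d, rfl⟩ := Nat.exists_eq_add_of_le hnm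
    rw [Nat.add_sub_cancel_left, Nat.div_eq_iff_mul_le_lt (by positivity),
      Nat.lt_iff_add_one_le] at h
    rw [div_two_pow_le_div_two_pow_add_iff, div_two_pow_add_le_div_two_pow_iff]
    exact_mod_cast h

lemma disjoint_dyadic {n k k' : ℕ} (h : k ≠ k') : Disjoint (dyadic n k) (dyadic n k') := by
  wlog hlt : k < k' generalizing k k'
  · exact (this h.symm (by omega)).symm
  refine disjoint_left.2 fun x hx hx' => (hx.2.trans_le ?_).not_ge hx'.1
  gcongr
  exact_mod_cast hlt

lemma dyadic_subset_or_subset_or_disjoint (m j n k : ℕ) :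
    dyadic m j ⊆ dyadic n k ∨ dyadic n k ⊆ dyadic m j ∨ Disjoint (dyadic m j) (dyadic n k) := by
  wlog hnm : n ≤ m generalizing m j n k
  · rcases this n k m j (by omega) with h | h | h
    exacts [Or.inr (Or.inl h), Or.inl h, Or.inr (Or.inr h.symm)]
  by_cases hjk : j / 2 ^ (m - n) = k
  · exact Or.inl (dyadic_subset_dyadic_iff.2 ⟨hnm, hjk⟩)
  · exact Or.inr (Or.inr ((disjoint_dyadic hjk).mono_left
      (dyadic_subset_dyadic_iff.2 ⟨hnm, rfl⟩)))

lemma dyadic_succ_subset {m i q t : ℕ} (h : dyadic (m + 1) i ⊆ dyadic q t) :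
    (m + 1 = q ∧ i = t) ∨ dyadic m (i / 2) ⊆ dyadic q t := by
  obtain ⟨hqm, rfl⟩ := dyadic_subset_dyadic_iff.1 h
  rcases hqm.eq_or_lt with rfl | hlt
  · simp
  · refine Or.inr (dyadic_subset_dyadic_iff.2 ⟨by omega, ?_⟩)
    rw [Nat.div_div_eq_div_mul, ← pow_succ', show m - q + 1 = m + 1 - q by omega]

lemma dyadic_subset_Ico_zero_one {n k : ℕ} (hk : k < 2 ^ n) : dyadic n k ⊆ Ico 0 1 := by
  simpa [dyadic] using (dyadic_subset_dyadic_iff (m := n) (j := k) (n := 0) (k := 0)).2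
    ⟨n.zero_le, Nat.div_eq_of_lt hk⟩

lemma dyadic_subset_Ici_one {n k : ℕ} (hk : 2 ^ n ≤ k) : dyadic n k ⊆ Ici 1 := by
  intro x hx
  refine le_trans ?_ hx.1
  rw [le_div_iff₀ (by positivity), one_mul]
  exact_mod_cast hk

lemma dyadic_eq_dplus_union_dminus (n k : ℕ) : dyadic n k = dplus n k ∪ dminus n k := by
  have hmid : ((2 * k : ℕ) : ℝ) + 1 = ((2 * k + 1 : ℕ) : ℝ) := by push_cast; ring
  rw [dplus, dminus, dyadic, dyadic, dyadic, hmid, Ico_union_Ico_eq_Ico]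
  · congr 1
    · rw [pow_succ]; push_cast; field_simp
    · rw [pow_succ]; push_cast; field_simp; ring
  all_goals (apply div_le_div_of_nonneg_right _ (by positivity); push_cast; linarith)

lemma disjoint_dplus_dminus (n k : ℕ) : Disjoint (dplus n k) (dminus n k) :=
  disjoint_dyadic (by omega)

lemma setIntegral_dyadic_eq_intervalIntegral (h : ℝ → ℝ) (n k : ℕ) :
    ∫ x in dyadic n k, h x = ∫ x in (k / 2 ^ n : ℝ)..((k + 1) / 2 ^ n), h x := by
  rw [intervalIntegral.integral_of_le (dyadic_left_lt_right n k).le, dyadic,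
    integral_Ico_eq_integral_Ioc]

lemma ae_eq_zero_of_forall_intervalIntegral_eq_zero {h : ℝ → ℝ} (hh : LocallyIntegrable h)
    (hprim : ∀ x, ∫ t in (0 : ℝ)..x, h t = 0) : h =ᵐ[volume] 0 := by
  filter_upwards [LocallyIntegrable.ae_hasDerivAt_integral hh] with x hx
  have hderiv := hx 0
  simp only [hprim] at hderiv
  exact hderiv.unique (hasDerivAt_const x 0)

lemma intervalIntegral_zero_dyadic_eq_zero {h : ℝ → ℝ} (hh : Integrable h)
    (hdy : ∀ m j, ∫ x in dyadic m j, h x = 0) (m j : ℕ) :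
    ∫ t in (0 : ℝ)..(j / 2 ^ m), h t = 0 := by
  induction j with
  | zero => simp
  | succ j ih =>
    rw [← intervalIntegral.integral_add_adjacent_intervals (b := j / 2 ^ m)
      hh.intervalIntegrable hh.intervalIntegrable, ih, zero_add, Nat.cast_succ,
      ← setIntegral_dyadic_eq_intervalIntegral, hdy]

lemma intervalIntegral_eq_zero_of_forall_dyadic {h : ℝ → ℝ} (hh : Integrable h)
    (hsupp : ∀ x < 0, h x = 0) (hdy : ∀ m j, ∫ x in dyadic m j, h x = 0) (x : ℝ) :
    ∫ t in (0 : ℝ)..x, h t = 0 := by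
  rcases lt_or_ge x 0 with hx | hx
  · rw [intervalIntegral.integral_symm, intervalIntegral.integral_of_le hx.le,
      integral_Ioc_eq_integral_Ioo, setIntegral_eq_zero_of_forall_eq_zero
      fun t ht => hsupp t ht.2, neg_zero]
  · have hdense : Tendsto (fun m : ℕ => (⌊x * 2 ^ m⌋₊ : ℝ) / 2 ^ m) atTop (𝓝 x) :=
      (tendsto_nat_floor_mul_div_atTop hx).comp (tendsto_pow_atTop_atTop_of_one_lt one_lt_two)
    refine tendsto_nhds_unique (((hh.continuous_primitive 0).tendsto x).comp hdense) ?_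
    simp [Function.comp_def, intervalIntegral_zero_dyadic_eq_zero hh hdy]

lemma haarC_add {f g : ℝ → ℝ} (hf : Integrable f) (hg : Integrable g) (n k : ℕ) :
    haarC (f + g) n k = haarC f n k + haarC g n k := by
  simp only [haarC, Pi.add_apply, integral_add hf.integrableOn hg.integrableOn]
  ring

lemma haarC_eq_zero_of_ae_eq_zero {f : ℝ → ℝ} (hf : f =ᵐ[volume] 0) (n k : ℕ) :
    haarC f n k = 0 := by
  simp [haarC, integral_eq_zero_of_ae (ae_restrict_of_ae hf)]

lemma setIntegral_dyadic_eq_zero_of_haarC_eq_zero {f : ℝ → ℝ} (hf : Integrable f)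
    (hfs : ∀ x, x ∉ Ico (0 : ℝ) 1 → f x = 0) (hroot : ∫ x in Ico (0 : ℝ) 1, f x = 0)
    (hc : ∀ m j, j < 2 ^ m → haarC f m j = 0) (m j : ℕ) :
    ∫ x in dyadic m j, f x = 0 := by
  rcases le_or_gt (2 ^ m) j with hj | hj
  · exact setIntegral_eq_zero_of_forall_eq_zero fun x hx =>
      hfs x fun h => (h.2.trans_le (dyadic_subset_Ici_one hj hx)).false
  induction m generalizing j with
  | zero => simp_all [dyadic]
  | succ m ih =>
    have hparent := ih (j / 2) (by rw [pow_succ] at hj; omega)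
    rw [dyadic_eq_dplus_union_dminus, setIntegral_union (disjoint_dplus_dminus _ _)
      (measurableSet_dyadic _ _) hf.integrableOn hf.integrableOn] at hparent
    have hhaar := hc m (j / 2) (by rw [pow_succ] at hj; omega)
    rw [haarC] at hhaar
    rcases Nat.even_or_odd' j with ⟨i, rfl | rfl⟩
    · rw [show 2 * i / 2 = i by omega] at hparent hhaar
      change ∫ x in dplus m i, f x = 0
      linarith
    · rw [show (2 * i + 1) / 2 = i by omega] at hparent hhaar
      change ∫ x in dminus m i, f x = 0
      linarith

lemma ae_eq_zero_of_haarC_eq_zero {f : ℝ → ℝ} (hf : Integrable f)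
    (hfs : ∀ x, x ∉ Ico (0 : ℝ) 1 → f x = 0) (hroot : ∫ x in Ico (0 : ℝ) 1, f x = 0)
    (hc : ∀ m j, j < 2 ^ m → haarC f m j = 0) : f =ᵐ[volume] 0 :=
  ae_eq_zero_of_forall_intervalIntegral_eq_zero hf.locallyIntegrable
    (intervalIntegral_eq_zero_of_forall_dyadic hf
      (fun x hx => hfs x fun h => (h.1.trans_lt' hx).false)
      (setIntegral_dyadic_eq_zero_of_haarC_eq_zero hf hfs hroot hc))

lemma integral_abs_add_pos {f g : ℝ → ℝ} (hf : Integrable f) (hg : Integrable g)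
    (hfs : ∀ x, x ∉ Ico (0 : ℝ) 1 → f x = 0) (hroot : ∫ x in Ico (0 : ℝ) 1, f x = 0)
    (hdisj : ∀ m j, j < 2 ^ m → haarC f m j ≠ 0 → haarC g m j = 0)
    (hpos : 0 < ∫ x, |f x|) : 0 < ∫ x, |f x + g x| := by
  refine (integral_nonneg fun _ => abs_nonneg _).lt_of_ne' fun hzero => hpos.ne' ?_
  have hsum : f + g =ᵐ[volume] 0 := by
    filter_upwards [(integral_eq_zero_iff_of_nonneg (fun _ => abs_nonneg _)
      (hf.add hg).abs).1 hzero] with x hx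
    simpa using hx
  have hc : ∀ m j, j < 2 ^ m → haarC f m j = 0 := by
    intro m j hj
    have := haarC_eq_zero_of_ae_eq_zero hsum m j
    rw [haarC_add hf hg] at this
    by_contra hne
    rw [hdisj m j hj hne, add_zero] at this
    exact hne this
  exact integral_eq_zero_of_ae ((ae_eq_zero_of_haarC_eq_zero hf hfs hroot hc).mono fun x hx => by
    simp_all)

-- `copyDyadic f p s t` replaces `f` on `dyadic p t` by the translate of `f` on `dyadic p s`.
def copyDyadic (f : ℝ → ℝ) (p s t : ℕ) : ℝ → ℝ :=
  (dyadic p t).piecewise (fun x => f (x - ((t : ℝ) - s) / 2 ^ p)) f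

lemma symmL_eq_copyDyadic (f : ℝ → ℝ) (n k : ℕ) :
    symmL f n k = copyDyadic f (n + 1) (2 * k) (2 * k + 1) := by
  funext x
  simp only [symmL, copyDyadic, Set.piecewise, dminus]
  push_cast
  ring_nf

lemma symmR_eq_copyDyadic (f : ℝ → ℝ) (n k : ℕ) :
    symmR f n k = copyDyadic f (n + 1) (2 * k + 1) (2 * k) := by
  funext x
  simp only [symmR, copyDyadic, Set.piecewise, dplus]
  push_cast
  ring_nf

section copyDyadic

variable {f g : ℝ → ℝ} {p s t : ℕ}

lemma abs_copyDyadic :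
    (fun x => |copyDyadic f p s t x|) = copyDyadic (fun x => |f x|) p s t := by
  funext x; unfold copyDyadic Set.piecewise; split_ifs <;> rfl

lemma abs_copyDyadic_add_copyDyadic :
    (fun x => |copyDyadic f p s t x + copyDyadic g p s t x|) =
      copyDyadic (fun x => |f x + g x|) p s t := by
  funext x; unfold copyDyadic Set.piecewise; split_ifs <;> rfl

lemma copyDyadic_of_notMem {x : ℝ} (hx : x ∉ dyadic p t) : copyDyadic f p s t x = f x :=
  piecewise_eq_of_notMem _ _ _ hx

lemma integrable_copyDyadic (hf : Integrable f) : Integrable (copyDyadic f p s t) :=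
  Integrable.piecewise (measurableSet_dyadic p t) (hf.comp_sub_right _).integrableOn
    hf.integrableOn

lemma setIntegral_copyDyadic_of_disjoint {S : Set ℝ} (hS : MeasurableSet S)
    (hd : Disjoint S (dyadic p t)) :
    ∫ x in S, copyDyadic f p s t x = ∫ x in S, f x :=
  setIntegral_congr_fun hS fun _ hx => copyDyadic_of_notMem (disjoint_left.1 hd hx)

lemma setIntegral_copyDyadic_dyadic {d r : ℕ} (hr : r < 2 ^ d) :
    ∫ x in dyadic (p + d) (2 ^ d * t + r), copyDyadic f p s t x =
      ∫ x in dyadic (p + d) (2 ^ d * s + r), f x := by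
  set c : ℝ := ((t : ℝ) - s) / 2 ^ p
  have hsub : dyadic (p + d) (2 ^ d * t + r) ⊆ dyadic p t :=
    dyadic_subset_dyadic_iff.2 ⟨by omega, by
      rw [Nat.add_sub_cancel_left, Nat.div_eq_iff_mul_le_lt (by positivity)]
      constructor <;> nlinarith⟩
  have htranslate :
      dyadic (p + d) (2 ^ d * t + r) = (· - c) ⁻¹' dyadic (p + d) (2 ^ d * s + r) := by
    rw [dyadic, dyadic, preimage_sub_const_Ico]
    congr 1 <;> (simp only [c, pow_add]; push_cast; field_simp; ring)
  rw [setIntegral_congr_fun (g := fun x => f (x - c)) (measurableSet_dyadic _ _)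
      fun x hx => piecewise_eq_of_mem _ _ _ (hsub hx), htranslate,
    (measurePreserving_sub_right volume c).setIntegral_preimage_emb
      (measurableEmbedding_subRight c)]

lemma setIntegral_copyDyadic_self :
    ∫ x in dyadic p t, copyDyadic f p s t x = ∫ x in dyadic p s, f x := by
  simpa using setIntegral_copyDyadic_dyadic (f := f) (p := p) (s := s) (t := t) (d := 0) (r := 0)
    (by norm_num)

lemma setIntegral_copyDyadic_of_superset (hf : Integrable f) {S : Set ℝ} (hS : MeasurableSet S)
    (hsub : dyadic p t ⊆ S) :
    ∫ x in S, copyDyadic f p s t x =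
      (∫ x in S, f x) - (∫ x in dyadic p t, f x) + ∫ x in dyadic p s, f x := by
  have hsplit := sdiff_union_of_subset hsub
  have hdisj : Disjoint (S \ dyadic p t) (dyadic p t) := disjoint_sdiff_left
  have hmeas := measurableSet_dyadic p t
  rw [← hsplit, setIntegral_union hdisj hmeas (integrable_copyDyadic hf).integrableOn
      (integrable_copyDyadic hf).integrableOn, setIntegral_union hdisj hmeas hf.integrableOn
      hf.integrableOn, setIntegral_copyDyadic_of_disjoint (hS.diff hmeas) hdisj,
    setIntegral_copyDyadic_self]
  ring

lemma integral_copyDyadic (hf : Integrable f) :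
    ∫ x, copyDyadic f p s t x =
      (∫ x, f x) - (∫ x in dyadic p t, f x) + ∫ x in dyadic p s, f x := by
  simpa using setIntegral_copyDyadic_of_superset hf MeasurableSet.univ (subset_univ _)

lemma setIntegral_copyDyadic_of_not_subset (hf : Integrable f)
    (heq : ∫ x in dyadic p s, f x = ∫ x in dyadic p t, f x) {q i : ℕ}
    (hqi : ¬ dyadic q i ⊆ dyadic p t) :
    ∫ x in dyadic q i, copyDyadic f p s t x = ∫ x in dyadic q i, f x := by
  rcases dyadic_subset_or_subset_or_disjoint q i p t with h | h | h
  · exact absurd h hqi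
  · rw [setIntegral_copyDyadic_of_superset hf (measurableSet_dyadic q i) h, heq]; ring
  · exact setIntegral_copyDyadic_of_disjoint (measurableSet_dyadic q i) h

lemma haarC_copyDyadic_dyadic {d r : ℕ} (hr : r < 2 ^ d) :
    haarC (copyDyadic f p s t) (p + d) (2 ^ d * t + r) = haarC f (p + d) (2 ^ d * s + r) := by
  have hr₀ : 2 * r < 2 ^ (d + 1) := by rw [pow_succ]; omega
  have hr₁ : 2 * r + 1 < 2 ^ (d + 1) := by rw [pow_succ]; omega
  have hlevel : p + d + 1 = p + (d + 1) := by ring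
  have hchild : ∀ u, 2 * (2 ^ d * u + r) = 2 ^ (d + 1) * u + 2 * r := fun u => by ring
  simp only [haarC, dplus, dminus, hlevel, hchild, add_assoc,
    setIntegral_copyDyadic_dyadic hr₀, setIntegral_copyDyadic_dyadic hr₁]

end copyDyadic

section Siblings

variable {f g : ℝ → ℝ} {n k s t : ℕ}

lemma setIntegral_dyadic_succ_eq_of_haarC_eq_zero (hc : haarC f n k = 0) (hs : s / 2 = k)
    (ht : t / 2 = k) : ∫ x in dyadic (n + 1) s, f x = ∫ x in dyadic (n + 1) t, f x := by
  rw [haarC, dplus, dminus, sub_eq_zero] at hc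
  obtain rfl | rfl : s = 2 * k ∨ s = 2 * k + 1 := by omega
  all_goals obtain rfl | rfl : t = 2 * k ∨ t = 2 * k + 1 := by omega
  all_goals first | rfl | exact hc | exact hc.symm

lemma haarC_copyDyadic_self (hs : s / 2 = k) (ht : t / 2 = k) (hst : s ≠ t) :
    haarC (copyDyadic f (n + 1) s t) n k = 0 := by
  have hsource : ∫ x in dyadic (n + 1) s, copyDyadic f (n + 1) s t x =
      ∫ x in dyadic (n + 1) s, f x :=
    setIntegral_copyDyadic_of_disjoint (measurableSet_dyadic _ _) (disjoint_dyadic hst)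
  rw [haarC, dplus, dminus, sub_eq_zero]
  obtain ⟨rfl, rfl⟩ | ⟨rfl, rfl⟩ : s = 2 * k ∧ t = 2 * k + 1 ∨ s = 2 * k + 1 ∧ t = 2 * k := by
    omega
  · rw [hsource, setIntegral_copyDyadic_self]
  · rw [hsource, setIntegral_copyDyadic_self]

-- The new index `j'` is chosen before `f`, so that it serves `f` and `g` at once.
lemma exists_haarC_copyDyadic_eq (hk : k < 2 ^ n) (hs : s / 2 = k) (ht : t / 2 = k) {m j : ℕ}
    (hj : j < 2 ^ m) (hmj : ¬(m = n ∧ j = k)) :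
    ∃ j' < 2 ^ m, ∀ f : ℝ → ℝ, Integrable f → haarC f n k = 0 →
      haarC (copyDyadic f (n + 1) s t) m j = haarC f m j' := by
  by_cases hJ : dyadic m j ⊆ dyadic (n + 1) t
  · obtain ⟨hnm, hjt⟩ := dyadic_subset_dyadic_iff.1 hJ
    obtain ⟨d, rfl⟩ := Nat.exists_eq_add_of_le hnm
    rw [Nat.add_sub_cancel_left] at hjt
    obtain ⟨r, hr, rfl⟩ : ∃ r < 2 ^ d, j = 2 ^ d * t + r :=
      ⟨j % 2 ^ d, Nat.mod_lt _ (by positivity), by rw [← hjt, Nat.div_add_mod]⟩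
    refine ⟨2 ^ d * s + r, ?_, fun f _ _ => haarC_copyDyadic_dyadic hr⟩
    calc 2 ^ d * s + r < 2 ^ d * (s + 1) := by rw [mul_add, mul_one]; omega
      _ ≤ 2 ^ d * 2 ^ (n + 1) := Nat.mul_le_mul_left _ (by rw [pow_succ]; omega)
      _ = 2 ^ (n + 1 + d) := by ring
  · refine ⟨j, hj, fun f hf hc => ?_⟩
    have hchild : ∀ i, i / 2 = j → ¬ dyadic (m + 1) i ⊆ dyadic (n + 1) t := by
      intro i hi hsub
      rcases dyadic_succ_subset hsub with ⟨hm, hit⟩ | hparent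
      · exact hmj ⟨by omega, by omega⟩
      · exact hJ (hi ▸ hparent)
    have heq := setIntegral_dyadic_succ_eq_of_haarC_eq_zero hc hs ht
    rw [haarC, haarC, dplus, dminus,
      setIntegral_copyDyadic_of_not_subset hf heq (hchild _ (by omega)),
      setIntegral_copyDyadic_of_not_subset hf heq (hchild _ (by omega))]

lemma haarC_copyDyadic_eq_zero_or_exists (hk : k < 2 ^ n) (hs : s / 2 = k) (ht : t / 2 = k)
    (hst : s ≠ t) (hf : Integrable f) (hc : haarC f n k = 0) :
    ∀ m j : ℕ, j < 2 ^ m → haarC (copyDyadic f (n + 1) s t) m j = 0 ∨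
      ∃ m' j' : ℕ, j' < 2 ^ m' ∧ haarC (copyDyadic f (n + 1) s t) m j = haarC f m' j' := by
  intro m j hj
  by_cases hmj : m = n ∧ j = k
  · obtain ⟨rfl, rfl⟩ := hmj
    exact Or.inl (haarC_copyDyadic_self hs ht hst)
  · obtain ⟨j', hj', hcopy⟩ := exists_haarC_copyDyadic_eq hk hs ht hj hmj
    exact Or.inr ⟨m, j', hj', hcopy f hf hc⟩

lemma haarC_copyDyadic_disjoint (hk : k < 2 ^ n) (hs : s / 2 = k) (ht : t / 2 = k)
    (hst : s ≠ t) (hf : Integrable f) (hg : Integrable g) (hcf : haarC f n k = 0)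
    (hcg : haarC g n k = 0) (hdisj : ∀ m j : ℕ, j < 2 ^ m → haarC f m j ≠ 0 → haarC g m j = 0) :
    ∀ m j : ℕ, j < 2 ^ m → haarC (copyDyadic f (n + 1) s t) m j ≠ 0 →
      haarC (copyDyadic g (n + 1) s t) m j = 0 := by
  intro m j hj hne
  by_cases hmj : m = n ∧ j = k
  · obtain ⟨rfl, rfl⟩ := hmj
    exact haarC_copyDyadic_self hs ht hst
  · obtain ⟨j', hj', hcopy⟩ := exists_haarC_copyDyadic_eq hk hs ht hj hmj
    rw [hcopy f hf hcf] at hne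
    rw [hcopy g hg hcg]
    exact hdisj m j' hj' hne

lemma setIntegral_Ico_copyDyadic (hk : k < 2 ^ n) (hs : s / 2 = k) (ht : t / 2 = k)
    (hf : Integrable f) (hc : haarC f n k = 0) :
    ∫ x in Ico (0 : ℝ) 1, copyDyadic f (n + 1) s t x = ∫ x in Ico (0 : ℝ) 1, f x := by
  rw [setIntegral_copyDyadic_of_superset hf measurableSet_Ico
    (dyadic_subset_Ico_zero_one (by rw [pow_succ]; omega)),
    setIntegral_dyadic_succ_eq_of_haarC_eq_zero hc hs ht]
  ring

lemma copyDyadic_eq_zero_of_notMem_Ico (hk : k < 2 ^ n) (ht : t / 2 = k)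
    (hfs : ∀ x, x ∉ Ico (0 : ℝ) 1 → f x = 0) :
    ∀ x, x ∉ Ico (0 : ℝ) 1 → copyDyadic f (n + 1) s t x = 0 := fun x hx =>
  (copyDyadic_of_notMem fun h =>
    hx (dyadic_subset_Ico_zero_one (by rw [pow_succ]; omega) h)).trans (hfs x hx)

lemma integral_abs_copyDyadic_add_pos (hk : k < 2 ^ n) (hs : s / 2 = k) (ht : t / 2 = k)
    (hst : s ≠ t) (hf : Integrable f) (hg : Integrable g)
    (hfs : ∀ x, x ∉ Ico (0 : ℝ) 1 → f x = 0) (hroot : ∫ x in Ico (0 : ℝ) 1, f x = 0)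
    (hdisj : ∀ m j : ℕ, j < 2 ^ m → haarC f m j ≠ 0 → haarC g m j = 0)
    (hcf : haarC f n k = 0) (hcg : haarC g n k = 0)
    (hpos : 0 < ∫ x, |copyDyadic f (n + 1) s t x|) :
    0 < ∫ x, |copyDyadic f (n + 1) s t x + copyDyadic g (n + 1) s t x| :=
  integral_abs_add_pos (integrable_copyDyadic hf) (integrable_copyDyadic hg)
    (copyDyadic_eq_zero_of_notMem_Ico hk ht hfs)
    ((setIntegral_Ico_copyDyadic hk hs ht hf hcf).trans hroot)
    (haarC_copyDyadic_disjoint hk hs ht hst hf hg hcf hcg hdisj) hpos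

end Siblings

lemma add_div_add_le_div_or_le_div {a₁ a₂ b₁ b₂ : ℝ} (hb₁ : 0 ≤ b₁) (hb₂ : 0 ≤ b₂)
    (hb : 0 < b₁ + b₂) (ha₁ : b₁ = 0 → a₁ ≤ 0) (ha₂ : b₂ = 0 → a₂ ≤ 0) :
    (0 < b₁ ∧ (a₁ + a₂) / (b₁ + b₂) ≤ a₁ / b₁) ∨ (0 < b₂ ∧ (a₁ + a₂) / (b₁ + b₂) ≤ a₂ / b₂) := by
  set μ := (a₁ + a₂) / (b₁ + b₂)
  have hμ : μ * b₁ + μ * b₂ = a₁ + a₂ := by rw [← mul_add]; exact div_mul_cancel₀ _ hb.ne'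
  by_contra! h
  have below : ∀ a b, 0 ≤ b → (b = 0 → a ≤ 0) → (0 < b → a / b < μ) → a ≤ μ * b := by
    intro a b hb0 ha hlt
    rcases hb0.eq_or_lt with rfl | hpos
    · simpa using ha rfl
    · exact ((div_lt_iff₀ hpos).1 (hlt hpos)).le
  rcases hb₁.eq_or_lt with rfl | hpos
  · have := (div_lt_iff₀ (by linarith)).1 (h.2 (by linarith))
    linarith [below a₁ 0 le_rfl ha₁ h.1]
  · have := (div_lt_iff₀ hpos).1 (h.1 hpos)
    linarith [below a₂ b₂ hb₂ ha₂ h.2]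

lemma exists_copyDyadic_div_le {f g : ℝ → ℝ} {n k : ℕ} (hf : Integrable f) (hg : Integrable g)
    (hfs : ∀ x, x ∉ Ico (0 : ℝ) 1 → f x = 0) (hroot : ∫ x in Ico (0 : ℝ) 1, f x = 0)
    (hdisj : ∀ m j : ℕ, j < 2 ^ m → haarC f m j ≠ 0 → haarC g m j = 0)
    (hk : k < 2 ^ n) (hcf : haarC f n k = 0) (hcg : haarC g n k = 0)
    (hfpos : 0 < ∫ x, |f x|) :
    ∃ s t : ℕ, (s = 2 * k ∧ t = 2 * k + 1 ∨ s = 2 * k + 1 ∧ t = 2 * k) ∧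
      0 < (∫ x, |copyDyadic f (n + 1) s t x + copyDyadic g (n + 1) s t x|) ∧
      (∫ x, |f x|) / (∫ x, |f x + g x|) ≤
        (∫ x, |copyDyadic f (n + 1) s t x|) /
          ∫ x, |copyDyadic f (n + 1) s t x + copyDyadic g (n + 1) s t x| := by
  set A : ℕ → ℕ → ℝ := fun s t => ∫ x, |copyDyadic f (n + 1) s t x|
  set B : ℕ → ℕ → ℝ := fun s t =>
    ∫ x, |copyDyadic f (n + 1) s t x + copyDyadic g (n + 1) s t x|
  have hA : A (2 * k) (2 * k + 1) + A (2 * k + 1) (2 * k) = 2 * ∫ x, |f x| := by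
    simp only [A, abs_copyDyadic, integral_copyDyadic hf.abs]; ring
  have hB : B (2 * k) (2 * k + 1) + B (2 * k + 1) (2 * k) = 2 * ∫ x, |f x + g x| := by
    simp only [B, abs_copyDyadic_add_copyDyadic,
      integral_copyDyadic (f := fun x => |f x + g x|) (hf.add hg).abs]
    ring
  have hBpos : 0 < ∫ x, |f x + g x| :=
    integral_abs_add_pos hf hg hfs hroot hdisj hfpos
  have hA_le : ∀ s t, s / 2 = k → t / 2 = k → s ≠ t → B s t = 0 → A s t ≤ 0 :=
    fun s t hs ht hst hB0 => not_lt.1 fun hApos => (integral_abs_copyDyadic_add_pos hk hs ht hst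
      hf hg hfs hroot hdisj hcf hcg hApos).ne' hB0
  have hratio : (∫ x, |f x|) / (∫ x, |f x + g x|) =
      (A (2 * k) (2 * k + 1) + A (2 * k + 1) (2 * k)) /
        (B (2 * k) (2 * k + 1) + B (2 * k + 1) (2 * k)) := by
    rw [hA, hB, mul_div_mul_left _ _ two_ne_zero]
  rw [hratio]
  rcases add_div_add_le_div_or_le_div (integral_nonneg fun _ => abs_nonneg _)
    (integral_nonneg fun _ => abs_nonneg _) (by rw [hB]; exact mul_pos two_pos hBpos)
    (hA_le (2 * k) (2 * k + 1) (by omega) (by omega) (by omega))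
    (hA_le (2 * k + 1) (2 * k) (by omega) (by omega) (by omega))
    with ⟨hpos, hle⟩ | ⟨hpos, hle⟩
  · exact ⟨_, _, Or.inl ⟨rfl, rfl⟩, hpos, hle⟩
  · exact ⟨_, _, Or.inr ⟨rfl, rfl⟩, hpos, hle⟩

theorem stmt8_general (f g : ℝ → ℝ) (hf : Integrable f) (hg : Integrable g)
    (hfs : ∀ x, x ∉ Set.Ico (0 : ℝ) 1 → f x = 0)
    (hfroot : hcoef f HIdx.root = 0) (hgroot : hcoef g HIdx.root = 0)
    (hdisj : ∀ I : HIdx, I.valid → hcoef f I ≠ 0 → hcoef g I = 0)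
    (n k : ℕ) (hk : k < 2 ^ n) (hcf : haarC f n k = 0) (hcg : haarC g n k = 0)
    (hfpos : 0 < ∫ x, |f x|) :
    ∃ f' g' : ℝ → ℝ,
      ((f' = symmL f n k ∧ g' = symmL g n k) ∨ (f' = symmR f n k ∧ g' = symmR g n k)) ∧
      (∀ I : HIdx, I.valid → hcoef f' I ≠ 0 → hcoef g' I = 0) ∧
      haarC f' n k = 0 ∧ haarC g' n k = 0 ∧
      (∀ m j : ℕ, j < 2 ^ m → haarC f' m j = 0 ∨
        ∃ m' j' : ℕ, j' < 2 ^ m' ∧ haarC f' m j = haarC f m' j') ∧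
      (∀ m j : ℕ, j < 2 ^ m → haarC g' m j = 0 ∨
        ∃ m' j' : ℕ, j' < 2 ^ m' ∧ haarC g' m j = haarC g m' j') ∧
      0 < (∫ x, |f' x + g' x|) ∧
      (∫ x, |f x|) / (∫ x, |f x + g x|) ≤ (∫ x, |f' x|) / ∫ x, |f' x + g' x| := by
  have hdisj' : ∀ m j : ℕ, j < 2 ^ m → haarC f m j ≠ 0 → haarC g m j = 0 :=
    fun m j => hdisj (.node m j)
  obtain ⟨s, t, hpair, hpos, hle⟩ :=
    exists_copyDyadic_div_le hf hg hfs hfroot hdisj' hk hcf hcg hfpos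
  have hs : s / 2 = k := by omega
  have ht : t / 2 = k := by omega
  have hst : s ≠ t := by omega
  refine ⟨copyDyadic f (n + 1) s t, copyDyadic g (n + 1) s t, ?_, ?_,
    haarC_copyDyadic_self hs ht hst, haarC_copyDyadic_self hs ht hst,
    haarC_copyDyadic_eq_zero_or_exists hk hs ht hst hf hcf,
    haarC_copyDyadic_eq_zero_or_exists hk hs ht hst hg hcg, hpos, hle⟩
  · rcases hpair with ⟨rfl, rfl⟩ | ⟨rfl, rfl⟩
    · exact Or.inl ⟨(symmL_eq_copyDyadic f n k).symm, (symmL_eq_copyDyadic g n k).symm⟩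
    · exact Or.inr ⟨(symmR_eq_copyDyadic f n k).symm, (symmR_eq_copyDyadic g n k).symm⟩
  · rintro (_ | ⟨m, j⟩) hv hne
    · exact (setIntegral_Ico_copyDyadic hk hs ht hg hcg).trans hgroot
    · exact haarC_copyDyadic_disjoint hk hs ht hst hf hg hcf hcg hdisj' m j hv hne

/-- Lemma 3.4: one of the two simultaneous symmetrizations of `(f, g)` on `I` keeps the Haar
supports disjoint, kills the coefficient at `I`, only reuses old coefficients, and does not
decrease the ratio `‖f‖/‖f+g‖`. -/
theorem stmt8 (f g : ℝ → ℝ) (hf : Integrable f) (hg : Integrable g)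
    (hfs : ∀ x, x ∉ Set.Ico (0 : ℝ) 1 → f x = 0)
    (hgs : ∀ x, x ∉ Set.Ico (0 : ℝ) 1 → g x = 0)
    (hfroot : hcoef f HIdx.root = 0) (hgroot : hcoef g HIdx.root = 0)
    (hdisj : ∀ I : HIdx, I.valid → hcoef f I ≠ 0 → hcoef g I = 0)
    (n k : ℕ) (hk : k < 2 ^ n) (hcf : haarC f n k = 0) (hcg : haarC g n k = 0)
    (hfpos : 0 < ∫ x, |f x|) :
    ∃ f' g' : ℝ → ℝ,
      ((f' = symmL f n k ∧ g' = symmL g n k) ∨ (f' = symmR f n k ∧ g' = symmR g n k)) ∧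
      (∀ I : HIdx, I.valid → hcoef f' I ≠ 0 → hcoef g' I = 0) ∧
      haarC f' n k = 0 ∧ haarC g' n k = 0 ∧
      (∀ m j : ℕ, j < 2 ^ m → haarC f' m j = 0 ∨
        ∃ m' j' : ℕ, j' < 2 ^ m' ∧ haarC f' m j = haarC f m' j') ∧
      (∀ m j : ℕ, j < 2 ^ m → haarC g' m j = 0 ∨
        ∃ m' j' : ℕ, j' < 2 ^ m' ∧ haarC g' m j = haarC g m' j') ∧
      0 < (∫ x, |f' x + g' x|) ∧
      (∫ x, |f x|) / (∫ x, |f x + g x|) ≤ (∫ x, |f' x|) / ∫ x, |f' x + g' x| :=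
  stmt8_general f g hf hg hfs hfroot hgroot hdisj n k hk hcf hcg hfpos
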